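/- arXiv:2405.15100 — 4 statements merged into one kernel-verified Lean document; each statement's English description precedes it below -/
import Mathlib

section
/- Let γ : [0,1] → ℝ² be a continuous rectifiable path of length ℓ and let ρ > 0. Then the 2-dimensional Lebesgue measure of the closed ρ-neighborhood of the image of γ, i.e. of the set {x ∈ ℝ² : dist(x, γ([0,1])) ≤ ρ}, is at most 2ρℓ + πρ². (In particular, the area swept by a disc of radius 2r whose center moves along a path of length ℓ is at most 4rℓ + 4πr².) -/
/-!
Split `γ` at finitely many parameters, so finely that every point of the curve lies within `ε`
of one of the split points `P₀, …, Pₙ₊₁`; the `ρ`-neighbourhood of the curve then lies in the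
`(ρ + ε)`-neighbourhood of the polygon `P₀ ⋯ Pₙ₊₁`, whose length is at most `ℓ`. The
`r`-neighbourhood of a segment of length `d` is a stadium, covered by a `d × 2r` rectangle and
two half discs that together form one disc: its area is at most `2rd + πr²`. Consecutive stadia
share the disc around their common vertex, so each stadium after the first adds at most `2rd`.
Hence the area is at most `2(ρ + ε)ℓ + π(ρ + ε)²` for every `ε > 0`; let `ε → 0`.
-/

open MeasureTheory Metric Set Filter Topology
open scoped ENNReal

local notation "ℝ²" => EuclideanSpace ℝ (Fin 2)

theorem measure_biUnion_range_le_of_chain {α : Type*} [MeasurableSpace α] {μ : Measure α}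
    {T : ℕ → Set α} (hT : ∀ i, MeasurableSet (T i)) {a : ℕ → ℝ≥0∞} {c : ℝ≥0∞} (hc : c ≠ ∞)
    (hTa : ∀ i, μ (T i) ≤ a i + c) (hoverlap : ∀ i, c ≤ μ (T i ∩ T (i + 1))) (n : ℕ) :
    μ (⋃ i ∈ Finset.range (n + 1), T i) ≤ ∑ i ∈ Finset.range (n + 1), a i + c := by
  induction n with
  | zero => simpa using hTa 0
  | succ n ih =>
    set U := ⋃ i ∈ Finset.range (n + 1), T i
    have hU : c ≤ μ (U ∩ T (n + 1)) :=
      (hoverlap n).trans <| measure_mono <| inter_subset_inter_left _ <|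
        subset_biUnion_of_mem (u := T) (Finset.self_mem_range_succ n)
    refine (ENNReal.add_le_add_iff_right hc).1 ?_
    calc μ (⋃ i ∈ Finset.range (n + 1 + 1), T i) + c
        ≤ μ (U ∪ T (n + 1)) + μ (U ∩ T (n + 1)) := by
          rw [Finset.range_add_one, Finset.set_biUnion_insert, union_comm]
          gcongr
      _ = μ U + μ (T (n + 1)) := measure_union_add_inter _ (hT _)
      _ ≤ (∑ i ∈ Finset.range (n + 1), a i + c) + (a (n + 1) + c) := add_le_add ih (hTa _)
      _ = ∑ i ∈ Finset.range (n + 1 + 1), a i + c + c := by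
          rw [Finset.sum_range_succ a (n + 1)]; ring

theorem sum_dist_le_eVariationOn {α E : Type*} [LinearOrder α] [PseudoMetricSpace E]
    {f : α → E} {s : Set α} (hf : eVariationOn f s ≠ ∞) {u : ℕ → α} (hu : Monotone u)
    (hus : ∀ i, u i ∈ s) (n : ℕ) :
    ∑ i ∈ Finset.range n, dist (f (u i)) (f (u (i + 1))) ≤ (eVariationOn f s).toReal := by
  have h := eVariationOn.sum_le (f := f) (n := n) hu hus
  rw [← ENNReal.toReal_le_toReal (ENNReal.sum_ne_top.2 fun _ _ => edist_ne_top _ _) hf,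
    ENNReal.toReal_sum fun _ _ => edist_ne_top _ _] at h
  simpa only [edist_dist, ENNReal.toReal_ofReal dist_nonneg, dist_comm] using h

theorem exists_monotone_dist_lt_of_continuousOn {α : Type*} [PseudoMetricSpace α] {γ : ℝ → α}
    (hγ : ContinuousOn γ (Icc 0 1)) {ε : ℝ} (hε : 0 < ε) :
    ∃ (n : ℕ) (u : ℕ → ℝ), Monotone u ∧ (∀ i, u i ∈ Icc 0 1) ∧
      ∀ t ∈ Icc (0 : ℝ) 1, ∃ i ≤ n, dist (γ t) (γ (u i)) < ε := by
  obtain ⟨δ, hδ, hγδ⟩ := Metric.uniformContinuousOn_iff.1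
    (isCompact_Icc.uniformContinuousOn_of_continuous hγ) ε hε
  have hu01 : ∀ i : ℕ, min (i * δ) 1 ∈ Icc (0 : ℝ) 1 :=
    fun i => ⟨le_min (by positivity) zero_le_one, min_le_right _ _⟩
  refine ⟨⌊δ⁻¹⌋₊, fun i => min (i * δ) 1,
    fun i j hij => min_le_min_right _ (by gcongr), hu01, fun t ht => ?_⟩
  have hlow : ⌊t / δ⌋₊ * δ ≤ t := (le_div_iff₀ hδ).1 (Nat.floor_le (div_nonneg ht.1 hδ.le))
  have hhigh : t < (⌊t / δ⌋₊ + 1) * δ := (div_lt_iff₀ hδ).1 (Nat.lt_floor_add_one _)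
  have hn : ⌊t / δ⌋₊ ≤ ⌊δ⁻¹⌋₊ := Nat.floor_le_floor <| by
    rw [div_eq_mul_inv]; exact mul_le_of_le_one_left (inv_nonneg.2 hδ.le) ht.2
  refine ⟨⌊t / δ⌋₊, hn, hγδ t ht _ (hu01 _) ?_⟩
  dsimp only
  rw [Real.dist_eq, min_eq_left (hlow.trans ht.2), abs_lt]
  constructor <;> linarith

theorem isCompact_segment {E : Type*} [NormedAddCommGroup E] [NormedSpace ℝ E] (p q : E) :
    IsCompact (segment ℝ p q) := by
  rw [← convexHull_pair (𝕜 := ℝ)]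
  exact (toFinite _).isCompact_convexHull ℝ

theorem dist_sq_fin_two (x y : ℝ²) : dist x y ^ 2 = (x 0 - y 0) ^ 2 + (x 1 - y 1) ^ 2 := by
  rw [EuclideanSpace.dist_eq, Real.sq_sqrt (by positivity), Fin.sum_univ_two, Real.dist_eq,
    Real.dist_eq, sq_abs, sq_abs]

theorem mem_closedBall_iff_fin_two {x y : ℝ²} {r : ℝ} (hr : 0 ≤ r) :
    x ∈ closedBall y r ↔ (x 0 - y 0) ^ 2 + (x 1 - y 1) ^ 2 ≤ r ^ 2 := by
  rw [mem_closedBall, ← dist_sq_fin_two, sq_le_sq₀ dist_nonneg hr]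

theorem volume_closedBall_fin_two_eq_ofReal (x : ℝ²) {r : ℝ} (hr : 0 ≤ r) :
    volume (closedBall x r) = ENNReal.ofReal (Real.pi * r ^ 2) := by
  rw [EuclideanSpace.volume_closedBall_fin_two, ← ENNReal.ofReal_pow hr,
    ← ENNReal.ofReal_mul (by positivity), mul_comm]

/-- The closed `r`-neighbourhood of the segment from the origin to `(d, 0)`. -/
def stadium (d r : ℝ) : Set ℝ² := {x | ∃ c ∈ Icc 0 d, (x 0 - c) ^ 2 + x 1 ^ 2 ≤ r ^ 2}

theorem volume_stadium_le {d r : ℝ} (hd : 0 ≤ d) (hr : 0 ≤ r) :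
    volume (stadium d r) ≤ ENNReal.ofReal (2 * r * d + Real.pi * r ^ 2) := by
  set a : ℝ² := EuclideanSpace.single 0 d
  set B : Set ℝ² := closedBall a r
  set H : Set ℝ² := {x | x 0 < d}
  set R : Set ℝ² := WithLp.ofLp ⁻¹' univ.pi ![Icc 0 d, Icc (-r) r]
  -- the left half disc is moved by `a` to become the half `B ∩ H` of the right end disc `B`
  have hcover : stadium d r ⊆ R ∪ ((· + a) ⁻¹' (B ∩ H) ∪ B \ H) := by
    rintro x ⟨c, ⟨hc0, hcd⟩, hx⟩
    simp only [R, B, H, a, mem_union, mem_preimage, mem_inter_iff, Set.mem_sdiff, mem_ofPred_eq,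
      mem_univ_pi, Fin.forall_fin_two, mem_closedBall_iff_fin_two hr, Matrix.cons_val_zero,
      Matrix.cons_val_one, Matrix.cons_val_fin_one, mem_Icc, PiLp.add_apply,
      PiLp.single_eq_same, PiLp.single_eq_of_ne, ne_eq, one_ne_zero, not_false_eq_true,
      add_sub_cancel_right, add_zero, sub_zero, add_lt_iff_neg_right, not_lt]
    rcases lt_or_ge (x 0) 0 with h0 | h0
    · exact Or.inr (Or.inl ⟨by nlinarith, h0⟩)
    rcases le_or_gt (x 0) d with hd' | hd'
    · exact Or.inl ⟨⟨h0, hd'⟩, abs_le.1 (abs_le_of_sq_le_sq (by nlinarith) hr)⟩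
    · exact Or.inr (Or.inr ⟨by nlinarith, hd'.le⟩)
  have hR : volume R = ENNReal.ofReal (2 * r * d) := by
    rw [(PiLp.volume_preserving_ofLp _).measure_preimage
      (MeasurableSet.univ_pi fun i => by fin_cases i <;> exact measurableSet_Icc).nullMeasurableSet,
      volume_pi_pi, Fin.prod_univ_two]
    simp only [Matrix.cons_val_zero, Matrix.cons_val_one, Real.volume_Icc,
      ← ENNReal.ofReal_mul (sub_nonneg.2 hd)]
    ring_nf
  have hH : MeasurableSet H := measurableSet_lt (by fun_prop) measurable_const
  calc volume (stadium d r)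
      ≤ volume R + (volume ((· + a) ⁻¹' (B ∩ H)) + volume (B \ H)) :=
        (measure_mono hcover).trans <| (measure_union_le _ _).trans <| by
          gcongr; exact measure_union_le _ _
    _ = ENNReal.ofReal (2 * r * d) + ENNReal.ofReal (Real.pi * r ^ 2) := by
        rw [measure_preimage_add_right, measure_inter_add_sdiff _ hH, hR,
          volume_closedBall_fin_two_eq_ofReal _ hr]
    _ = ENNReal.ofReal (2 * r * d + Real.pi * r ^ 2) :=
        (ENNReal.ofReal_add (by positivity) (by positivity)).symm

theorem volume_cthickening_segment_le (p q : ℝ²) {r : ℝ} (hr : 0 ≤ r) :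
    volume (cthickening r (segment ℝ p q)) ≤
      ENNReal.ofReal (2 * r * dist p q + Real.pi * r ^ 2) := by
  set e : ℝ² := EuclideanSpace.single 0 (dist p q)
  set L := (Submodule.span ℝ {q - p - e})ᗮ.reflection
  have hL : L (q - p) = e := Submodule.reflection_sub <| by simp [e, dist_eq_norm']
  have hsub : cthickening r (segment ℝ p q) ⊆ (fun x => L (x - p)) ⁻¹' stadium (dist p q) r := by
    intro x hx
    rw [cthickening_eq_biUnion_closedBall _ hr, (isCompact_segment p q).isClosed.closure_eq] at hx
    obtain ⟨y, hy, hxy⟩ := mem_iUnion₂.1 hx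
    rw [segment_eq_image'] at hy
    obtain ⟨θ, ⟨hθ0, hθ1⟩, rfl⟩ := hy
    have hLy : L (p + θ • (q - p) - p) = θ • e := by rw [add_sub_cancel_left, map_smul, hL]
    refine ⟨θ * dist p q, ⟨by positivity, mul_le_of_le_one_left dist_nonneg hθ1⟩, ?_⟩
    have key := dist_sq_fin_two (L (x - p)) (L (p + θ • (q - p) - p))
    rw [L.dist_map, dist_sub_right, hLy] at key
    simp only [e, PiLp.smul_apply, PiLp.single_eq_same, PiLp.single_eq_of_ne, ne_eq, one_ne_zero,
      not_false_eq_true, smul_eq_mul, mul_zero, sub_zero] at key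
    show (L (x - p) 0 - θ * dist p q) ^ 2 + L (x - p) 1 ^ 2 ≤ r ^ 2
    rw [← key]
    exact pow_le_pow_left₀ dist_nonneg hxy 2
  calc volume (cthickening r (segment ℝ p q))
      ≤ volume ((fun x => L (x - p)) ⁻¹' stadium (dist p q) r) := measure_mono hsub
    _ ≤ volume (stadium (dist p q) r) :=
        (L.measurePreserving.comp (measurePreserving_sub_right volume p)).measure_preimage_le _
    _ ≤ _ := volume_stadium_le dist_nonneg hr

theorem volume_biUnion_cthickening_segment_le (P : ℕ → ℝ²) {r : ℝ} (hr : 0 ≤ r) (n : ℕ) :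
    volume (⋃ i ∈ Finset.range (n + 1), cthickening r (segment ℝ (P i) (P (i + 1)))) ≤
      ENNReal.ofReal (2 * r * ∑ i ∈ Finset.range (n + 1), dist (P i) (P (i + 1)) +
        Real.pi * r ^ 2) := by
  have hchain := measure_biUnion_range_le_of_chain (μ := volume)
    (T := fun i => cthickening r (segment ℝ (P i) (P (i + 1))))
    (fun _ => isClosed_cthickening.measurableSet) ENNReal.ofReal_ne_top
    (fun i => (volume_cthickening_segment_le _ _ hr).trans_eq
      (ENNReal.ofReal_add (by positivity) (by positivity)))
    (fun i => (volume_closedBall_fin_two_eq_ofReal (P (i + 1)) hr).symm.trans_le <| measure_mono <|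
      subset_inter (closedBall_subset_cthickening (right_mem_segment ℝ _ _) r)
        (closedBall_subset_cthickening (left_mem_segment ℝ _ _) r)) n
  rwa [← ENNReal.ofReal_sum_of_nonneg (fun _ _ => by positivity),
    ← ENNReal.ofReal_add (Finset.sum_nonneg fun _ _ => by positivity) (by positivity),
    ← Finset.mul_sum] at hchain

/-- The area of the closed `ρ`-neighborhood of a continuous rectifiable path of
length `ℓ` in the Euclidean plane is at most `2ρℓ + πρ²`. -/
theorem neighborhood_area_le (γ : ℝ → EuclideanSpace ℝ (Fin 2)) (ℓ ρ : ℝ)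
    (hρ : 0 < ρ)
    (hcont : ContinuousOn γ (Set.Icc 0 1))
    (hrect : eVariationOn γ (Set.Icc 0 1) ≠ ⊤)
    (hlen : ℓ = (eVariationOn γ (Set.Icc 0 1)).toReal) :
    volume {x : EuclideanSpace ℝ (Fin 2) |
        Metric.infDist x (γ '' Set.Icc 0 1) ≤ ρ} ≤
      ENNReal.ofReal (2 * ρ * ℓ + Real.pi * ρ ^ 2) := by
  have hbound : ∀ ε > 0, volume {x | infDist x (γ '' Icc 0 1) ≤ ρ} ≤
      ENNReal.ofReal (2 * (ρ + ε) * ℓ + Real.pi * (ρ + ε) ^ 2) := by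
    intro ε hε
    obtain ⟨n, u, hu, hu01, hnear⟩ := exists_monotone_dist_lt_of_continuousOn hcont hε
    have hcover : {x | infDist x (γ '' Icc 0 1) ≤ ρ} ⊆
        ⋃ i ∈ Finset.range (n + 1), cthickening (ρ + ε) (segment ℝ (γ (u i)) (γ (u (i + 1)))) := by
      intro x (hx : infDist x _ ≤ ρ)
      obtain ⟨_, ⟨t, ht, rfl⟩, hxt⟩ :=
        (isCompact_Icc.image_of_continuousOn hcont).exists_infDist_eq_dist
          ((nonempty_Icc.2 zero_le_one).image γ) x
      obtain ⟨i, hi, hti⟩ := hnear t ht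
      refine mem_biUnion (Finset.mem_range_succ_iff.2 hi) <|
        mem_cthickening_of_dist_le x _ _ _ (left_mem_segment ℝ _ _) ?_
      linarith [dist_triangle x (γ t) (γ (u i))]
    have hlength := hlen ▸ sum_dist_le_eVariationOn hrect hu hu01 (n + 1)
    calc _ ≤ _ := measure_mono hcover
      _ ≤ _ := volume_biUnion_cthickening_segment_le _ (by positivity) n
      _ ≤ _ := ENNReal.ofReal_le_ofReal <| by gcongr
  have hlim : Tendsto (fun ε => ENNReal.ofReal (2 * (ρ + ε) * ℓ + Real.pi * (ρ + ε) ^ 2))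
      (𝓝[>] 0) (𝓝 (ENNReal.ofReal (2 * ρ * ℓ + Real.pi * ρ ^ 2))) :=
    ((ENNReal.continuous_ofReal.comp (by fun_prop)).tendsto' 0 _ (by simp)).mono_left
      nhdsWithin_le_nhds
  exact ge_of_tendsto hlim (eventually_nhdsWithin_of_forall hbound)
end

section
/- Let r > 0, let γ : [0,1] → ℝ² be a continuous rectifiable path of length ℓ, and let c₁, …, c_k ∈ ℝ² be points whose pairwise distances satisfy ‖c_i − c_j‖ ≥ 2r for i ≠ j (so the closed discs B(c_i, r) have pairwise disjoint interiors). If the image of γ intersects each closed disc B(c_i, r), then k · πr² ≤ 4rℓ + 4πr²; equivalently, k ≤ 4(ℓ/(πr) + 1). -/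
/-!
Sort the visit times `t₁ ≤ ⋯ ≤ t_k` and put `q_j = γ(t_j)`. The open discs `B(c_i, r)` are
disjoint, of total area `kπr²`, and each lies in `B(q_j, 2r)` where `q_j` is its visit point. On the other hand `⋃ⱼ B(q_j, 2r)` has area at most `π(2r)²` plus the areas of the lunes
`B(q_{j+1}, 2r) \ B(q_j, 2r)`, and a lune `B(b, s) \ B(a, s)` has area at most `2s‖b - a‖`
(each chord of it parallel to `b - a` has length at most `‖b - a‖`). Summing,
`kπr² ≤ 4πr² + 4r ∑ⱼ ‖q_{j+1} - q_j‖ ≤ 4πr² + 4rℓ`.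
-/

open MeasureTheory Metric Set Real

lemma sub_sqrt_sub_sq_mem_Ioc {s d v u : ℝ} (hd : 0 ≤ d)
    (hb : v ^ 2 + (u - d) ^ 2 ≤ s ^ 2) (ha : s ^ 2 < v ^ 2 + u ^ 2) :
    u - √(s ^ 2 - v ^ 2) ∈ Ioc 0 d := by
  have hw : √(s ^ 2 - v ^ 2) ^ 2 = s ^ 2 - v ^ 2 :=
    Real.sq_sqrt (by nlinarith [sq_nonneg (u - d)])
  have hud : |u - d| ≤ √(s ^ 2 - v ^ 2) := Real.abs_le_sqrt (by linarith)
  rw [abs_le] at hud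
  constructor <;> nlinarith [Real.sqrt_nonneg (s ^ 2 - v ^ 2)]

lemma measurePreserving_shear {α : Type*} [MeasurableSpace α] (μ : Measure α) [SFinite μ]
    {w : α → ℝ} (hw : Measurable w) :
    MeasurePreserving (fun p : α × ℝ => (p.1, p.2 - w p.1)) (μ.prod volume) (μ.prod volume) :=
  (MeasurePreserving.id μ).skew_product (by fun_prop)
    (Filter.Eventually.of_forall fun _ => map_sub_right_eq_self volume _)

namespace EuclideanSpace

lemma measurePreserving_finTwo_coords :
    MeasurePreserving (fun x : EuclideanSpace ℝ (Fin 2) => (x 0, x 1)) :=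
  (volume_preserving_finTwoArrow ℝ).comp (PiLp.volume_preserving_ofLp (Fin 2))

lemma dist_sq_fin_two (x y : EuclideanSpace ℝ (Fin 2)) :
    dist x y ^ 2 = (x 0 - y 0) ^ 2 + (x 1 - y 1) ^ 2 := by
  simp [dist_sq_eq, Fin.sum_univ_two, Real.dist_eq, sq_abs]

lemma volume_ball_fin_two_of_nonneg (x : EuclideanSpace ℝ (Fin 2)) {r : ℝ} (hr : 0 ≤ r) :
    volume (ball x r) = ENNReal.ofReal (π * r ^ 2) := by
  rw [volume_ball_fin_two, ← ENNReal.ofReal_pow hr, ← ENNReal.ofReal_mul (by positivity),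
    mul_comm]

lemma volume_closedBall_fin_two_of_nonneg (x : EuclideanSpace ℝ (Fin 2)) {r : ℝ} (hr : 0 ≤ r) :
    volume (closedBall x r) = ENNReal.ofReal (π * r ^ 2) := by
  rw [Measure.addHaar_closedBall_eq_addHaar_ball, volume_ball_fin_two_of_nonneg x hr]

lemma volume_closedBall_single_diff_closedBall_zero_le {s d : ℝ} (hs : 0 ≤ s) (hd : 0 ≤ d) :
    volume (closedBall (single (1 : Fin 2) d) s \ closedBall 0 s) ≤
      ENNReal.ofReal (2 * s * d) := by
  -- shifting each vertical line down by `√(s² - v²)` moves the lune into `[-s, s] × (0, d]`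
  set Φ : EuclideanSpace ℝ (Fin 2) → ℝ × ℝ := fun x => (x 0, x 1 - √(s ^ 2 - x 0 ^ 2))
  have hΦ : MeasurePreserving Φ :=
    (measurePreserving_shear volume (w := fun v => √(s ^ 2 - v ^ 2)) (by fun_prop)).comp
      measurePreserving_finTwo_coords
  have hsub : closedBall (single (1 : Fin 2) d) s \ closedBall 0 s ⊆
      Φ ⁻¹' (Icc (-s) s ×ˢ Ioc 0 d) := by
    rintro x ⟨hb, ha⟩
    replace hb := pow_le_pow_left₀ dist_nonneg (mem_closedBall.1 hb) 2
    replace ha := pow_lt_pow_left₀ (not_le.1 ha) hs two_ne_zero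
    simp only [dist_sq_fin_two, ne_eq, zero_ne_one, not_false_eq_true, PiLp.single_eq_of_ne,
      PiLp.single_eq_same, PiLp.zero_apply, sub_zero] at hb ha
    exact ⟨abs_le_of_sq_le_sq' (by nlinarith) hs, sub_sqrt_sub_sq_mem_Ioc hd hb ha⟩
  calc volume (closedBall (single (1 : Fin 2) d) s \ closedBall 0 s)
      ≤ volume (Φ ⁻¹' (Icc (-s) s ×ˢ Ioc 0 d)) := measure_mono hsub
    _ = volume (Icc (-s) s ×ˢ Ioc 0 d) :=
      hΦ.measure_preimage (measurableSet_Icc.prod measurableSet_Ioc).nullMeasurableSet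
    _ = ENNReal.ofReal (2 * s * d) := by
      rw [Measure.volume_eq_prod, Measure.prod_prod, Real.volume_Icc, Real.volume_Ioc,
        ← ENNReal.ofReal_mul (by linarith)]
      ring_nf

lemma volume_closedBall_diff_closedBall_le (a b : EuclideanSpace ℝ (Fin 2)) {s : ℝ}
    (hs : 0 ≤ s) :
    volume (closedBall b s \ closedBall a s) ≤ ENNReal.ofReal (2 * s) * edist b a := by
  set d := dist b a
  set f := Submodule.reflection (ℝ ∙ ((b - a) - single (1 : Fin 2) d))ᗮ
  let T := (IsometryEquiv.subRight a).trans f.toIsometryEquiv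
  have hT : MeasurePreserving T := f.measurePreserving.comp (measurePreserving_sub_right volume a)
  have hTa : T a = 0 := by simp [T]
  have hTb : T b = single (1 : Fin 2) d := Submodule.reflection_sub (by simp [d, dist_eq_norm])
  calc volume (closedBall b s \ closedBall a s)
      = volume (T ⁻¹' (closedBall (T b) s \ closedBall (T a) s)) := by
        rw [preimage_sdiff, T.preimage_closedBall, T.preimage_closedBall, T.symm_apply_apply,
          T.symm_apply_apply]
    _ = volume (closedBall (T b) s \ closedBall (T a) s) :=
        hT.measure_preimage
          (measurableSet_closedBall.diff measurableSet_closedBall).nullMeasurableSet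
    _ ≤ ENNReal.ofReal (2 * s * d) := by
        rw [hTa, hTb]
        exact volume_closedBall_single_diff_closedBall_zero_le hs dist_nonneg
    _ = ENNReal.ofReal (2 * s) * edist b a := by
        rw [edist_dist, ← ENNReal.ofReal_mul (by positivity)]

end EuclideanSpace

lemma measure_biUnion_range_succ_le {α : Type*} [MeasurableSpace α] (μ : Measure α)
    (A : ℕ → Set α) (n : ℕ) :
    μ (⋃ j ∈ Finset.range (n + 1), A j) ≤
      μ (A 0) + ∑ j ∈ Finset.range n, μ (A (j + 1) \ A j) := by
  induction n with
  | zero => simp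
  | succ n ih =>
    set U := ⋃ j ∈ Finset.range (n + 1), A j
    have hAn : A n ⊆ U := Finset.subset_set_biUnion_of_mem (Finset.self_mem_range_succ n)
    rw [Finset.range_add_one, Finset.set_biUnion_insert, Finset.sum_range_succ]
    calc μ (A (n + 1) ∪ U)
        ≤ μ ((A (n + 1) \ A n) ∪ U) :=
          measure_mono (union_subset ((subset_sdiff_union _ (A n)).trans
            (union_subset_union_right _ hAn)) subset_union_right)
      _ ≤ μ (A (n + 1) \ A n) + μ U := measure_union_le _ _
      _ ≤ μ (A (n + 1) \ A n) + (μ (A 0) + ∑ j ∈ Finset.range n, μ (A (j + 1) \ A j)) := by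
          gcongr
      _ = _ := by ring

lemma exists_monotone_enumeration_Icc {α : Type*} [LinearOrder α] {a b : α} (hab : a ≤ b)
    {k : ℕ} (t : Fin k → α) (ht : ∀ i, t i ∈ Icc a b) :
    ∃ u : ℕ → α, Monotone u ∧ (∀ n, u n ∈ Icc a b) ∧ ∀ i, ∃ j < k, u j = t i := by
  set σ := Tuple.sort t
  have hσ : Monotone (t ∘ σ) := Tuple.monotone_sort t
  refine ⟨fun n => if h : n < k then t (σ ⟨n, h⟩) else b, ?_, ?_, ?_⟩
  · intro m n hmn
    dsimp only
    split_ifs with hm hn hn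
    · exact hσ (Fin.mk_le_mk.2 hmn)
    · exact (ht _).2
    · omega
    · exact le_rfl
  · intro n
    dsimp only
    split_ifs
    exacts [ht _, ⟨hab, le_rfl⟩]
  · intro i
    exact ⟨σ.symm i, (σ.symm i).isLt, by simp⟩

theorem card_mul_pi_mul_sq_le_of_visits {α : Type*} [LinearOrder α] {a b : α} (hab : a ≤ b)
    {r : ℝ} (hr : 0 ≤ r) {k : ℕ} (γ : α → EuclideanSpace ℝ (Fin 2))
    (c : Fin k → EuclideanSpace ℝ (Fin 2)) (hsep : ∀ i j : Fin k, i ≠ j → 2 * r ≤ ‖c i - c j‖)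
    (hvisit : ∀ i, (γ '' Icc a b ∩ closedBall (c i) r).Nonempty) :
    k * ENNReal.ofReal (π * r ^ 2) ≤
      ENNReal.ofReal (4 * π * r ^ 2) + ENNReal.ofReal (4 * r) * eVariationOn γ (Icc a b) := by
  have hvisit' : ∀ i, ∃ t ∈ Icc a b, γ t ∈ closedBall (c i) r := fun i => by
    obtain ⟨_, ⟨t, ht, rfl⟩, hγt⟩ := hvisit i
    exact ⟨t, ht, hγt⟩
  choose t ht hγt using hvisit'
  obtain ⟨u, hu_mono, hu_mem, hu_enum⟩ := exists_monotone_enumeration_Icc hab t ht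
  set q := fun j => γ (u j)
  have hdisj : Pairwise (Function.onFun Disjoint fun i => ball (c i) r) := fun i j hij =>
    ball_disjoint_ball (by rw [dist_eq_norm]; linarith [hsep i j hij])
  have hcover : ⋃ i, ball (c i) r ⊆ ⋃ j ∈ Finset.range (k + 1), closedBall (q j) (2 * r) := by
    refine iUnion_subset fun i => ?_
    obtain ⟨j, hj, hji⟩ := hu_enum i
    refine ball_subset_closedBall.trans (Subset.trans ?_
      (Finset.subset_set_biUnion_of_mem (Finset.mem_range.2 (by omega : j < k + 1))))
    refine closedBall_subset_closedBall' ?_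
    have : dist (c i) (q j) ≤ r := by simpa [q, hji] using mem_closedBall'.1 (hγt i)
    linarith
  calc (k : ENNReal) * ENNReal.ofReal (π * r ^ 2) = volume (⋃ i, ball (c i) r) := by
        rw [measure_iUnion hdisj (fun _ => measurableSet_ball), tsum_fintype]
        simp [EuclideanSpace.volume_ball_fin_two_of_nonneg _ hr]
    _ ≤ volume (⋃ j ∈ Finset.range (k + 1), closedBall (q j) (2 * r)) := measure_mono hcover
    _ ≤ volume (closedBall (q 0) (2 * r)) + ∑ j ∈ Finset.range k,
          volume (closedBall (q (j + 1)) (2 * r) \ closedBall (q j) (2 * r)) :=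
        measure_biUnion_range_succ_le _ _ _
    _ ≤ ENNReal.ofReal (4 * π * r ^ 2) + ∑ j ∈ Finset.range k,
          ENNReal.ofReal (2 * (2 * r)) * edist (q (j + 1)) (q j) := by
        gcongr with j
        · rw [EuclideanSpace.volume_closedBall_fin_two_of_nonneg _ (by positivity)]
          exact le_of_eq (congrArg ENNReal.ofReal (by ring))
        · exact EuclideanSpace.volume_closedBall_diff_closedBall_le _ _ (by positivity)
    _ ≤ ENNReal.ofReal (4 * π * r ^ 2) + ENNReal.ofReal (4 * r) * eVariationOn γ (Icc a b) := by
        rw [← Finset.mul_sum, show 2 * (2 * r) = 4 * r by ring]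
        gcongr
        exact eVariationOn.sum_le hu_mono hu_mem

theorem card_disjoint_discs_visited_le_general (r ℓ : ℝ) (hr : 0 < r) (k : ℕ)
    (γ : ℝ → EuclideanSpace ℝ (Fin 2))
    (hrect : eVariationOn γ (Set.Icc 0 1) ≠ ⊤)
    (hlen : ℓ = (eVariationOn γ (Set.Icc 0 1)).toReal)
    (c : Fin k → EuclideanSpace ℝ (Fin 2))
    (hsep : ∀ i j : Fin k, i ≠ j → 2 * r ≤ ‖c i - c j‖)
    (hvisit : ∀ i : Fin k,
      ((γ '' Set.Icc 0 1) ∩ Metric.closedBall (c i) r).Nonempty) :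
    (k : ℝ) * (Real.pi * r ^ 2) ≤ 4 * r * ℓ + 4 * Real.pi * r ^ 2 ∧
      (k : ℝ) ≤ 4 * (ℓ / (Real.pi * r) + 1) := by
  have hℓ0 : 0 ≤ ℓ := hlen ▸ ENNReal.toReal_nonneg
  have hℓ : eVariationOn γ (Icc 0 1) = ENNReal.ofReal ℓ := by
    rw [hlen, ENNReal.ofReal_toReal hrect]
  have key := card_mul_pi_mul_sq_le_of_visits zero_le_one hr.le γ c hsep hvisit
  rw [hℓ, ← ENNReal.ofReal_natCast, ← ENNReal.ofReal_mul (by positivity),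
    ← ENNReal.ofReal_mul (by positivity), ← ENNReal.ofReal_add (by positivity) (by positivity),
    ENNReal.ofReal_le_ofReal_iff (by positivity)] at key
  have area : (k : ℝ) * (π * r ^ 2) ≤ 4 * r * ℓ + 4 * π * r ^ 2 := by linarith
  refine ⟨area, ?_⟩
  rw [show 4 * (ℓ / (π * r) + 1) = (4 * r * ℓ + 4 * π * r ^ 2) / (π * r ^ 2) by
    field_simp, le_div_iff₀ (by positivity)]
  exact area

/-- If a continuous rectifiable path of length `ℓ` in the plane visits `k` closed
discs of radius `r` whose centers are pairwise at distance at least `2r`, then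
`k·πr² ≤ 4rℓ + 4πr²`; equivalently `k ≤ 4(ℓ/(πr) + 1)`. -/
theorem card_disjoint_discs_visited_le (r ℓ : ℝ) (hr : 0 < r) (k : ℕ)
    (γ : ℝ → EuclideanSpace ℝ (Fin 2))
    (hcont : ContinuousOn γ (Set.Icc 0 1))
    (hrect : eVariationOn γ (Set.Icc 0 1) ≠ ⊤)
    (hlen : ℓ = (eVariationOn γ (Set.Icc 0 1)).toReal)
    (c : Fin k → EuclideanSpace ℝ (Fin 2))
    (hsep : ∀ i j : Fin k, i ≠ j → 2 * r ≤ ‖c i - c j‖)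
    (hvisit : ∀ i : Fin k,
      ((γ '' Set.Icc 0 1) ∩ Metric.closedBall (c i) r).Nonempty) :
    (k : ℝ) * (Real.pi * r ^ 2) ≤ 4 * r * ℓ + 4 * Real.pi * r ^ 2 ∧
      (k : ℝ) ≤ 4 * (ℓ / (Real.pi * r) + 1) :=
  card_disjoint_discs_visited_le_general r ℓ hr k γ hrect hlen c hsep hvisit
end

section
/- There exists a unique θ ∈ (0, π/4) such that (√3 − cos θ)/(1 + sin θ) = tan(2θ). (This angle θ*₍odd₎ characterizes the optimal sensing-node placement for the worst-case linear packing of sensing circles with an odd number of targets.) -/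
open Real

private lemma aux_pos {θ : ℝ} (hθ : θ ∈ Set.Ioo 0 (Real.pi / 4)) :
    0 < Real.cos (2 * θ) ∧ 0 < Real.cos θ ∧ 0 < Real.sin θ := by
  obtain ⟨h0, h1⟩ := hθ
  have hpi := Real.pi_pos
  refine ⟨Real.cos_pos_of_mem_Ioo ⟨by linarith, by linarith⟩,
    Real.cos_pos_of_mem_Ioo ⟨by linarith, by linarith⟩,
    Real.sin_pos_of_pos_of_lt_pi h0 (by linarith)⟩

private lemma aux_deriv {θ : ℝ} (hθ : θ ∈ Set.Ioo 0 (Real.pi / 4)) :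
    HasDerivAt (fun x => (Real.sqrt 3 - Real.cos x) / (1 + Real.sin x) - Real.tan (2 * x))
      ((Real.sin θ * (1 + Real.sin θ) - (Real.sqrt 3 - Real.cos θ) * Real.cos θ) /
        (1 + Real.sin θ) ^ 2 - 1 / Real.cos (2 * θ) ^ 2 * 2) θ := by
  obtain ⟨hc2, hc, hs⟩ := aux_pos hθ
  have hden : 1 + Real.sin θ ≠ 0 := by positivity
  have h1 : HasDerivAt (fun x => (Real.sqrt 3 - Real.cos x) / (1 + Real.sin x))
      ((Real.sin θ * (1 + Real.sin θ) - (Real.sqrt 3 - Real.cos θ) * Real.cos θ) /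
        (1 + Real.sin θ) ^ 2) θ := by
    exact (((Real.hasDerivAt_cos θ).const_sub (Real.sqrt 3)).div
      ((Real.hasDerivAt_sin θ).const_add 1) hden).congr_deriv (by ring)
  have h2 : HasDerivAt (fun x => Real.tan (2 * x)) (1 / Real.cos (2 * θ) ^ 2 * 2) θ := by
    exact (Real.hasDerivAt_tan hc2.ne').comp θ ((hasDerivAt_id θ).const_mul 2) |>.congr_deriv
      (by ring)
  exact h1.sub h2

private lemma aux_deriv_neg {θ : ℝ} (hθ : θ ∈ Set.Ioo 0 (Real.pi / 4)) :
    (Real.sin θ * (1 + Real.sin θ) - (Real.sqrt 3 - Real.cos θ) * Real.cos θ) /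
        (1 + Real.sin θ) ^ 2 - 1 / Real.cos (2 * θ) ^ 2 * 2 < 0 := by
  obtain ⟨hc2, hc, hs⟩ := aux_pos hθ
  have hsq3 : (1:ℝ) ≤ Real.sqrt 3 := by
    nlinarith [Real.sq_sqrt (by norm_num : (3:ℝ) ≥ 0), Real.sqrt_nonneg 3]
  have hA : (Real.sin θ * (1 + Real.sin θ) - (Real.sqrt 3 - Real.cos θ) * Real.cos θ) /
      (1 + Real.sin θ) ^ 2 < 1 := by
    rw [div_lt_one (by positivity)]
    have hpy := Real.sin_sq_add_cos_sq θ
    nlinarith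
  have hB : (2:ℝ) ≤ 1 / Real.cos (2 * θ) ^ 2 * 2 := by
    have h1 : Real.cos (2 * θ) ^ 2 ≤ 1 := by
      nlinarith [Real.sin_sq_add_cos_sq (2 * θ), sq_nonneg (Real.sin (2 * θ))]
    have : (1:ℝ) ≤ 1 / Real.cos (2 * θ) ^ 2 := by rw [le_div_iff₀ (by positivity : (0:ℝ) < Real.cos (2 * θ) ^ 2)]; linarith
    linarith
  linarith

private lemma aux_anti : StrictAntiOn
    (fun x => (Real.sqrt 3 - Real.cos x) / (1 + Real.sin x) - Real.tan (2 * x))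
    (Set.Ioo 0 (Real.pi / 4)) := by
  apply strictAntiOn_of_deriv_neg (convex_Ioo _ _)
  · exact fun x hx => ((aux_deriv hx).differentiableAt.continuousAt).continuousWithinAt
  · intro x hx
    rw [interior_Ioo] at hx
    rw [(aux_deriv hx).deriv]
    exact aux_deriv_neg hx

/-- There is a unique angle `θ ∈ (0, π/4)` satisfying the first-order optimality
condition `(√3 - cos θ)/(1 + sin θ) = tan(2θ)` for the worst-case linear packing
of sensing circles with an odd number of targets. -/
theorem exists_unique_theta_star :
    ∃! θ : ℝ, θ ∈ Set.Ioo 0 (Real.pi / 4) ∧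
      (Real.sqrt 3 - Real.cos θ) / (1 + Real.sin θ) = Real.tan (2 * θ) := by
  -- Existence via IVT on F(θ) = (√3 - cos θ) cos 2θ - (1 + sin θ) sin 2θ
  set F : ℝ → ℝ := fun x => (Real.sqrt 3 - Real.cos x) * Real.cos (2 * x) -
    (1 + Real.sin x) * Real.sin (2 * x) with hF
  have hcont : ContinuousOn F (Set.Icc 0 (Real.pi / 4)) := by fun_prop
  have hpi := Real.pi_pos
  have hF0 : 0 < F 0 := by
    simp only [hF]
    norm_num
    nlinarith [Real.sq_sqrt (by norm_num : (3:ℝ) ≥ 0), Real.sqrt_nonneg 3]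
  have hF1 : F (Real.pi / 4) < 0 := by
    simp only [hF]
    have : 2 * (Real.pi / 4) = Real.pi / 2 := by ring
    rw [this, Real.cos_pi_div_two, Real.sin_pi_div_two]
    have := Real.sin_pos_of_pos_of_lt_pi (by linarith : (0:ℝ) < Real.pi / 4) (by linarith)
    nlinarith
  have hmem : (0:ℝ) ∈ Set.Ioo (F (Real.pi / 4)) (F 0) := ⟨hF1, hF0⟩
  obtain ⟨c, hc, hFc⟩ := intermediate_value_Ioo' (by linarith : (0:ℝ) ≤ Real.pi / 4) hcont hmem
  obtain ⟨hc2, hcc, hcs⟩ := aux_pos hc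
  have heq : (Real.sqrt 3 - Real.cos c) / (1 + Real.sin c) = Real.tan (2 * c) := by
    rw [Real.tan_eq_sin_div_cos]
    rw [div_eq_div_iff (by positivity) hc2.ne']
    simp only [hF] at hFc
    linarith
  refine ⟨c, ⟨hc, heq⟩, ?_⟩
  rintro y ⟨hy, hyeq⟩
  exact aux_anti.injOn hy hc (by simp only [hyeq, heq, sub_self])
end

section
/- Let T ∈ ℝ², r > 0, and let A, C ∈ ℝ² be points with ‖A − T‖ > r and ‖C − T‖ > r, such that the closed segment from A to C does not intersect the closed disc B(T, r). Then the function S ↦ ‖A − S‖ + ‖C − S‖ attains a minimum over the closed disc B(T, r); every minimizer S* satisfies ‖S* − T‖ = r (the constraint is active); and at every minimizer the equal-angle (reflection) condition holds: ⟨A − S*, T − S*⟩ / ‖A − S*‖ = ⟨C − S*, T − S*⟩ / ‖C − S*‖, i.e. the line through S* and T bisects the angle between the segments from S* to A and from S* to C. -/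
/-!
Let `S` minimize `f S = ‖A - S‖ + ‖C - S‖` on the disc and put
`u = (A - S) / ‖A - S‖ + (C - S) / ‖C - S‖`, so that `-u` is the gradient of `f` at `S`.
Every point of the disc is reached from `S` along a segment inside it, so Fermat's rule says
that `S` maximizes `⟪u, ·⟫` on the disc. Since `S` is off the segment `[A, C]`, the unit vectors
towards `A` and `C` are not opposite, so `u ≠ 0`; a nonzero linear functional is maximized on a
disc only at the boundary point `T + r u / ‖u‖`. Hence `‖S - T‖ = r` and `T - S` is a negative
multiple of `u`, which makes equal angles with `A - S` and `C - S`.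
-/

open Metric Set
open scoped RealInnerProductSpace

variable {E : Type*} [NormedAddCommGroup E] [InnerProductSpace ℝ E]

theorem hasFDerivAt_norm_of_ne_zero {x : E} (hx : x ≠ 0) :
    HasFDerivAt (‖·‖) (‖x‖⁻¹ • innerSL ℝ x) x := by
  have h := (hasStrictFDerivAt_norm_sq x).hasFDerivAt.sqrt (by positivity)
  simp only [Real.sqrt_sq (norm_nonneg _)] at h
  convert h using 1
  ext y
  simp only [smul_apply, coe_innerSL_apply, smul_eq_mul, one_div, mul_inv_rev, nsmul_eq_mul,
    Nat.cast_ofNat]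
  field_simp

theorem hasFDerivAt_norm_sub_left {A S : E} (h : A ≠ S) :
    HasFDerivAt (fun x => ‖A - x‖) (-(‖A - S‖⁻¹ • innerSL ℝ (A - S))) S := by
  refine ((hasFDerivAt_norm_of_ne_zero (sub_ne_zero.2 h)).comp S
    ((hasFDerivAt_id S).const_sub A)).congr_fderiv ?_
  ext y
  simp

noncomputable def bisectorDir (a c : E) : E := ‖a‖⁻¹ • a + ‖c‖⁻¹ • c

-- Both sides equal `1 + ⟪a, c⟫ / (‖a‖ * ‖c‖)`.
theorem inner_bisectorDir_div_norm_comm {a c : E} (ha : a ≠ 0) (hc : c ≠ 0) :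
    ⟪bisectorDir a c, a⟫ / ‖a‖ = ⟪bisectorDir a c, c⟫ / ‖c‖ := by
  have ha' : ‖a‖ ≠ 0 := norm_ne_zero_iff.2 ha
  have hc' : ‖c‖ ≠ 0 := norm_ne_zero_iff.2 hc
  simp only [bisectorDir, inner_add_left, real_inner_smul_left, real_inner_self_eq_norm_sq,
    real_inner_comm a c]
  field_simp
  ring

theorem bisectorDir_sub_ne_zero {A C S : E} (hS : S ∉ segment ℝ A C) :
    bisectorDir (A - S) (C - S) ≠ 0 := by
  intro h
  refine hS (mem_segment_iff_wbtw.2 (wbtw_iff_sameRay_vsub.2 ?_))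
  have hray : SameRay ℝ (A - S) (-(C - S)) := by
    refine sameRay_iff_inv_norm_smul_eq.2 (Or.inr (Or.inr ?_))
    rw [norm_neg, smul_neg, ← add_eq_zero_iff_eq_neg]
    exact h
  simpa using hray.neg

theorem isMaxOn_inner_bisectorDir_of_isMinOn {K : Set E} {A C S : E} (hK : Convex ℝ K)
    (hS : S ∈ K) (hA : A ≠ S) (hC : C ≠ S)
    (hmin : IsMinOn (fun x => ‖A - x‖ + ‖C - x‖) K S) :
    IsMaxOn (⟪bisectorDir (A - S) (C - S), ·⟫) K S := by
  intro x hx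
  have hderiv := (hasFDerivAt_norm_sub_left hA).add (hasFDerivAt_norm_sub_left hC)
  have h := hmin.localize.hasFDerivWithinAt_nonneg hderiv.hasFDerivWithinAt
    (sub_mem_posTangentConeAt_of_segment_subset (hK.segment_subset hS hx))
  show ⟪_, x⟫ ≤ ⟪_, S⟫
  rw [← sub_nonneg, ← inner_sub_right, ← neg_sub x S]
  simp only [add_apply, neg_apply, smul_apply, innerSL_apply_apply, smul_eq_mul] at h
  simpa only [bisectorDir, inner_add_left, real_inner_smul_left, inner_neg_right, mul_neg,
    neg_add] using h

theorem norm_mul_le_inner_of_isMaxOn_inner_closedBall {U S T : E} {r : ℝ} (hr : 0 ≤ r)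
    (hmax : IsMaxOn (⟪U, ·⟫) (closedBall T r) S) : ‖U‖ * r ≤ ⟪U, S - T⟫ := by
  rcases eq_or_ne U 0 with rfl | hU
  · simp
  have hU' : ‖U‖ ≠ 0 := norm_ne_zero_iff.2 hU
  have hx : T + (r / ‖U‖) • U ∈ closedBall T r := by
    rw [mem_closedBall_iff_norm, add_sub_cancel_left, norm_smul, Real.norm_eq_abs,
      abs_of_nonneg (by positivity), div_mul_cancel₀ _ hU']
  have h : ⟪U, T + (r / ‖U‖) • U⟫ ≤ ⟪U, S⟫ := hmax hx
  rw [inner_add_right, real_inner_smul_right, real_inner_self_eq_norm_sq] at h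
  have hval : r / ‖U‖ * ‖U‖ ^ 2 = ‖U‖ * r := by field_simp
  rw [inner_sub_right]
  linarith

theorem norm_sub_eq_of_isMaxOn_inner_closedBall {U S T : E} {r : ℝ} (hS : S ∈ closedBall T r)
    (hU : U ≠ 0) (hmax : IsMaxOn (⟪U, ·⟫) (closedBall T r) S) : ‖S - T‖ = r := by
  have hST := mem_closedBall_iff_norm.1 hS
  have h := norm_mul_le_inner_of_isMaxOn_inner_closedBall ((norm_nonneg _).trans hST) hmax
  have hcs := real_inner_le_norm U (S - T)
  have hU' := norm_pos_iff.2 hU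
  exact le_antisymm hST (le_of_mul_le_mul_left (h.trans hcs) hU')

theorem sub_eq_smul_of_isMaxOn_inner_closedBall {U S T : E} {r : ℝ} (hS : S ∈ closedBall T r)
    (hU : U ≠ 0) (hmax : IsMaxOn (⟪U, ·⟫) (closedBall T r) S) :
    S - T = (r / ‖U‖) • U := by
  have hnorm := norm_sub_eq_of_isMaxOn_inner_closedBall hS hU hmax
  have h := norm_mul_le_inner_of_isMaxOn_inner_closedBall (hnorm ▸ norm_nonneg _) hmax
  have hcs : ‖S - T‖ • U = ‖U‖ • (S - T) :=
    inner_eq_norm_mul_iff_real.1 (le_antisymm (real_inner_le_norm U (S - T)) (hnorm ▸ h))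
  rw [hnorm] at hcs
  rw [div_eq_inv_mul, mul_smul, hcs, inv_smul_smul₀ (norm_ne_zero_iff.2 hU)]

/-- KKT / reflection condition for the optimal sensing node on a sensing disc: if
`A` and `C` lie strictly outside the closed disc `B(T, r)` and the segment from `A`
to `C` misses the disc, then `S ↦ ‖A - S‖ + ‖C - S‖` attains a minimum on the disc,
every minimizer lies on the boundary (`‖S* - T‖ = r`), and at every minimizer the
line through `S*` and `T` bisects the angle between the segments to `A` and `C`. -/
theorem sensing_node_reflection_condition (r : ℝ) (hr : 0 < r)
    (T A C : EuclideanSpace ℝ (Fin 2))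
    (hA : r < ‖A - T‖) (hC : r < ‖C - T‖)
    (hseg : Disjoint (segment ℝ A C) (Metric.closedBall T r)) :
    (∃ S ∈ Metric.closedBall T r,
        IsMinOn (fun S => ‖A - S‖ + ‖C - S‖) (Metric.closedBall T r) S) ∧
      ∀ S' ∈ Metric.closedBall T r,
        IsMinOn (fun S => ‖A - S‖ + ‖C - S‖) (Metric.closedBall T r) S' →
          ‖S' - T‖ = r ∧
            (inner ℝ (A - S') (T - S') : ℝ) / ‖A - S'‖ =
              (inner ℝ (C - S') (T - S') : ℝ) / ‖C - S'‖ := by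
  refine ⟨(isCompact_closedBall T r).exists_isMinOn ⟨T, mem_closedBall_self hr.le⟩
    (by fun_prop), fun S hS hmin => ?_⟩
  have hAS : A ≠ S := fun h => (h ▸ hA).not_ge (mem_closedBall_iff_norm.1 hS)
  have hCS : C ≠ S := fun h => (h ▸ hC).not_ge (mem_closedBall_iff_norm.1 hS)
  have hU := bisectorDir_sub_ne_zero (fun h => hseg.notMem_of_mem_left h hS)
  have hmax := isMaxOn_inner_bisectorDir_of_isMinOn (convex_closedBall T r) hS hAS hCS hmin
  refine ⟨norm_sub_eq_of_isMaxOn_inner_closedBall hS hU hmax, ?_⟩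
  rw [← neg_sub S T, sub_eq_smul_of_isMaxOn_inner_closedBall hS hU hmax, inner_neg_right,
    inner_neg_right, real_inner_smul_right, real_inner_smul_right, real_inner_comm,
    real_inner_comm _ (C - S), neg_div, neg_div, mul_div_assoc, mul_div_assoc,
    inner_bisectorDir_div_norm_comm (sub_ne_zero.2 hAS) (sub_ne_zero.2 hCS)]
end
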